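/- arXiv:1906.10352 — 2 statements merged into one kernel-verified Lean document; each statement's English description precedes it below -/
import Mathlib

section
/- Let H be a real Hilbert space, let (e_k)_{k≥1} ⊆ H be unit vectors and (e_k*)_{k≥1} ⊆ H satisfy the biorthogonality relations ⟨e_k*, e_l⟩ = 1 if k = l and 0 otherwise, and define the projections Π_n h := Σ_{k=1}^n ⟨e_k*, h⟩ e_k. Let G ⊆ {−1, 1} × ℕ and define the closed convex cone K := {h ∈ H : θ⟨e_k*, h⟩ ≥ 0 for all (θ, k) ∈ G}. Let (S_t)_{t≥0} be a family of bounded linear operators on H such that: (a) S_t(K) ⊆ K for all t ≥ 0, and (b) (Id − Π_n)(K) ⊆ K for all n ≥ 1. Define D := {((θ, k), h) ∈ G × K : liminf_{t↓0} θ⟨e_k*, S_t h⟩ / t < ∞}. Let n ≥ 1 and let Σ : H → H be a function whose range is contained in span{e_1, …, e_n}, and suppose that for every ((θ, k), h) ∈ D one has liminf_{t↓0} θ⟨e_k*, S_t h⟩ / t + θ⟨e_k*, Σ(h)⟩ ≥ 0. Then for every h ∈ K: liminf_{t↓0} (1/t) · d_K(S_t h + t Σ(h)) = 0, where d_K(x)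 := inf_{g ∈ K} ‖x − g‖. -/
open Filter Topology Metric
open scoped RealInnerProductSpace

/-!
Correct `x = S_t h + t Σ(h)` into `K` by moving each coordinate `k ∈ [1, n]` to the nearest
value allowed by the sign constraints `(θ, k) ∈ G`; the coordinates `k ∉ [1, n]` need no
correction, since there `Σ(h)` has no component and `S_t h ∈ K`. The cost is bounded by the
negative parts of `θ⟪e_k*, x⟫`, and `(θ⟪e_k*, x⟫)⁻ / t = (θ⟪e_k*, S_t h⟫ / t + θ⟪e_k*, Σ(h)⟫)⁻`,
which tends to `0` because the liminf of the first summand is at least `-θ⟪e_k*, Σ(h)⟫` (by the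
drift condition where it is finite, trivially where it is `+∞`). Hence `d_K(x) / t → 0`.
-/

lemma negPart_mul_of_nonneg {α : Type*} [Ring α] [LinearOrder α] [IsOrderedRing α]
    {a : α} (ha : 0 ≤ a) (b : α) : (a * b)⁻ = a * b⁻ := by
  rw [negPart_def, negPart_def, mul_max_of_nonneg _ _ ha, mul_neg, mul_zero]

lemma negPart_add_mul_div {t : ℝ} (ht : 0 < t) (a b : ℝ) : (a + t * b)⁻ / t = (a / t + b)⁻ := by
  rw [show a + t * b = t * (a / t + b) by field_simp, negPart_mul_of_nonneg ht.le,
    mul_div_cancel_left₀ _ ht.ne']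

lemma tendsto_negPart_add_of_zero_le_liminf_add {α : Type*} {l : Filter α} {f : α → ℝ} {c : ℝ}
    (h : liminf (fun a => (f a : EReal)) l < ⊤ → 0 ≤ liminf (fun a => (f a : EReal)) l + c) :
    Tendsto (fun a => (f a + c)⁻) l (𝓝 0) := by
  rw [Metric.tendsto_nhds]
  intro ε hε
  have hlt : ((-c - ε : ℝ) : EReal) < liminf (fun a => (f a : EReal)) l := by
    generalize liminf (fun a => (f a : EReal)) l = L at h ⊢
    induction L using EReal.rec with
    | bot => simp at h
    | top => exact EReal.coe_lt_top _
    | coe r =>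
      have : 0 ≤ r + c := by exact_mod_cast h (EReal.coe_lt_top r)
      exact_mod_cast (by linarith : -c - ε < r)
  filter_upwards [eventually_lt_of_lt_liminf hlt] with a ha
  have ha : -c - ε < f a := EReal.coe_lt_coe_iff.mp ha
  rw [Real.dist_eq, sub_zero, abs_of_nonneg (negPart_nonneg _), negPart_lt]
  exact ⟨by linarith, hε⟩

section Biorthogonal

variable {H ι : Type*} [NormedAddCommGroup H] [InnerProductSpace ℝ H] [DecidableEq ι]
  {e estar : ι → H} (hbi : ∀ k l, ⟪estar k, e l⟫ = if k = l then (1 : ℝ) else 0)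
include hbi

lemma inner_sum_smul_of_biorthogonal (s : Finset ι) (c : ι → ℝ) (l : ι) :
    ⟪estar l, ∑ k ∈ s, c k • e k⟫ = if l ∈ s then c l else 0 := by
  simp [inner_sum, real_inner_smul_right, hbi]

lemma inner_eq_zero_of_mem_span_of_biorthogonal {s : Set ι} {v : H}
    (hv : v ∈ Submodule.span ℝ (e '' s)) {l : ι} (hl : l ∉ s) : ⟪estar l, v⟫ = 0 := by
  have hker : e '' s ⊆ LinearMap.ker (innerₛₗ ℝ (estar l)) := by
    rintro _ ⟨k, hk, rfl⟩
    simp [hbi, show l ≠ k from fun hlk => hl (hlk ▸ hk)]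
  exact Submodule.span_le.mpr hker hv

end Biorthogonal

section SignedCone

variable {ι : Type*} (G : Set (ℝ × ι)) (k : ι)

/- `(1, k) ∈ G` asks for a nonnegative `k`-th coordinate, `(-1, k) ∈ G` for a nonpositive one;
`y + coordCorrection G k y` is the admissible value nearest to `y`. -/
open scoped Classical in
noncomputable def coordCorrection (y : ℝ) : ℝ :=
  (if (1, k) ∈ G then y⁻ else 0) - (if (-1, k) ∈ G then y⁺ else 0)

open scoped Classical in
noncomputable def coordViolation (y : ℝ) : ℝ :=
  (if (1, k) ∈ G then y⁻ else 0) + (if (-1, k) ∈ G then y⁺ else 0)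

variable {G k}

lemma mul_add_coordCorrection_nonneg {θ : ℝ} (hθ : θ = -1 ∨ θ = 1) (hp : (θ, k) ∈ G) (y : ℝ) :
    0 ≤ θ * (y + coordCorrection G k y) := by
  rcases hθ with rfl | rfl
  · by_cases h1 : ((1 : ℝ), k) ∈ G
    · simp [coordCorrection, hp, h1]
    · simpa [coordCorrection, hp, h1] using le_posPart y
  · by_cases h2 : ((-1 : ℝ), k) ∈ G
    · simp [coordCorrection, hp, h2]
    · simp only [coordCorrection, hp, h2, if_true, if_false, sub_zero, one_mul]
      linarith [posPart_sub_negPart y, posPart_nonneg y]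

lemma abs_coordCorrection_le (y : ℝ) : |coordCorrection G k y| ≤ coordViolation G k y := by
  unfold coordCorrection coordViolation
  have := posPart_nonneg y
  have := negPart_nonneg y
  refine (abs_sub _ _).trans_eq ?_
  congr 1 <;> split_ifs <;> simp [*]

lemma tendsto_coordViolation_div {α : Type*} {l : Filter α} {y g : α → ℝ}
    (hy : ∀ θ, (θ, k) ∈ G → Tendsto (fun a => (θ * y a)⁻ / g a) l (𝓝 0)) :
    Tendsto (fun a => coordViolation G k (y a) / g a) l (𝓝 0) := by
  simp only [coordViolation, add_div]
  rw [← add_zero (0 : ℝ)]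
  refine Tendsto.add ?_ ?_
  · by_cases hp : ((1 : ℝ), k) ∈ G
    · simpa [hp] using hy 1 hp
    · simpa [hp] using tendsto_const_nhds
  · by_cases hp : ((-1 : ℝ), k) ∈ G
    · simpa [hp] using hy (-1) hp
    · simpa [hp] using tendsto_const_nhds

variable {H : Type*} [NormedAddCommGroup H] [InnerProductSpace ℝ H]

def signedCone (estar : ι → H) (G : Set (ℝ × ι)) : Set H :=
  {h | ∀ p ∈ G, 0 ≤ p.1 * ⟪estar p.2, h⟫}

lemma infDist_signedCone_le [DecidableEq ι] {e estar : ι → H}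
    (hbi : ∀ k l, ⟪estar k, e l⟫ = if k = l then (1 : ℝ) else 0) (hnorm : ∀ k, ‖e k‖ ≤ 1)
    (hG : ∀ p ∈ G, p.1 = -1 ∨ p.1 = 1) (s : Finset ι) {x : H}
    (hx : ∀ p ∈ G, p.2 ∉ s → 0 ≤ p.1 * ⟪estar p.2, x⟫) :
    infDist x (signedCone estar G) ≤ ∑ k ∈ s, coordViolation G k ⟪estar k, x⟫ := by
  set c : ι → ℝ := fun k => coordCorrection G k ⟪estar k, x⟫
  have hmem : x + ∑ k ∈ s, c k • e k ∈ signedCone estar G := by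
    rintro ⟨θ, l⟩ hp
    rw [inner_add_right, inner_sum_smul_of_biorthogonal hbi]
    split_ifs with hl
    · exact mul_add_coordCorrection_nonneg (hG _ hp) hp _
    · simpa using hx _ hp hl
  calc infDist x (signedCone estar G)
      ≤ dist x (x + ∑ k ∈ s, c k • e k) := infDist_le_dist_of_mem hmem
    _ = ‖∑ k ∈ s, c k • e k‖ := by rw [dist_eq_norm, sub_add_cancel_left, norm_neg]
    _ ≤ ∑ k ∈ s, ‖c k • e k‖ := norm_sum_le _ _
    _ ≤ ∑ k ∈ s, coordViolation G k ⟪estar k, x⟫ := by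
      refine Finset.sum_le_sum fun k _ => ?_
      rw [norm_smul, Real.norm_eq_abs]
      exact (mul_le_of_le_one_right (abs_nonneg _) (hnorm k)).trans (abs_coordCorrection_le _)

end SignedCone

theorem stochastic_semigroup_nagumo_condition_general
    {H : Type*} [NormedAddCommGroup H] [InnerProductSpace ℝ H]
    (e estar : ℕ → H) (hnorm : ∀ k, ‖e k‖ = 1)
    (hbi : ∀ k l, ⟪estar k, e l⟫ = if k = l then (1 : ℝ) else 0)
    (G : Set (ℝ × ℕ)) (hG : ∀ p ∈ G, p.1 = -1 ∨ p.1 = 1)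
    (K : Set H) (hK : K = {h : H | ∀ p ∈ G, 0 ≤ p.1 * ⟪estar p.2, h⟫})
    (S : ℝ → H →L[ℝ] H)
    (hInv : ∀ t : ℝ, 0 ≤ t → ∀ h ∈ K, S t h ∈ K)
    (D : Set ((ℝ × ℕ) × H))
    (hD : D = {q : (ℝ × ℕ) × H | q.1 ∈ G ∧ q.2 ∈ K ∧
      liminf (fun t : ℝ => ((q.1.1 * ⟪estar q.1.2, S t q.2⟫ / t : ℝ) : EReal))
        (𝓝[>] (0 : ℝ)) < ⊤})
    (n : ℕ) (Sig : H → H)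
    (hrange : ∀ h : H, Sig h ∈ Submodule.span ℝ (e '' Set.Icc 1 n))
    (hdrift : ∀ q ∈ D,
      0 ≤ liminf (fun t : ℝ => ((q.1.1 * ⟪estar q.1.2, S t q.2⟫ / t : ℝ) : EReal))
            (𝓝[>] (0 : ℝ))
          + ((q.1.1 * ⟪estar q.1.2, Sig q.2⟫ : ℝ) : EReal)) :
    ∀ h ∈ K,
      liminf (fun t : ℝ => ((infDist (S t h + t • Sig h) K / t : ℝ) : EReal))
        (𝓝[>] (0 : ℝ)) = 0 := by
  subst hD
  intro h hh
  have hviol : ∀ θ k, (θ, k) ∈ G →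
      Tendsto (fun t => (θ * ⟪estar k, S t h + t • Sig h⟫)⁻ / t) (𝓝[>] 0) (𝓝 0) := by
    intro θ k hp
    refine (tendsto_negPart_add_of_zero_le_liminf_add
      fun hlt => hdrift ((θ, k), h) ⟨hp, hh, hlt⟩).congr' ?_
    filter_upwards [self_mem_nhdsWithin] with t (ht : 0 < t)
    rw [inner_add_right, real_inner_smul_right, mul_add, mul_left_comm, negPart_add_mul_div ht]
  have hdist : ∀ t > 0, infDist (S t h + t • Sig h) K
      ≤ ∑ k ∈ Finset.Icc 1 n, coordViolation G k ⟪estar k, S t h + t • Sig h⟫ := by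
    intro t ht
    subst hK
    refine infDist_signedCone_le hbi (fun k => (hnorm k).le) hG _ fun p hp hps => ?_
    have hSig : ⟪estar p.2, Sig h⟫ = 0 :=
      inner_eq_zero_of_mem_span_of_biorthogonal hbi (hrange h) (by simpa using hps)
    simpa [inner_add_right, real_inner_smul_right, hSig] using hInv t ht.le h hh p hp
  have hsum : Tendsto (fun t => ∑ k ∈ Finset.Icc 1 n,
      coordViolation G k ⟪estar k, S t h + t • Sig h⟫ / t) (𝓝[>] 0) (𝓝 0) := by
    simpa using tendsto_finsetSum (Finset.Icc 1 n)
      fun k _ => tendsto_coordViolation_div (hviol · k)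
  have hlim : Tendsto (fun t => infDist (S t h + t • Sig h) K / t) (𝓝[>] 0) (𝓝 0) :=
    squeeze_zero' (eventually_nhdsWithin_of_forall fun t (ht : 0 < t) =>
        div_nonneg infDist_nonneg ht.le)
      (eventually_nhdsWithin_of_forall fun t (ht : 0 < t) => by
        rw [← Finset.sum_div]
        exact div_le_div_of_nonneg_right (hdist t ht) ht.le)
      hsum
  simpa using (EReal.tendsto_coe.mpr hlim).liminf_eq

/-- the stochastic semigroup Nagumo condition. `K` is the closed convex cone
generated by a biorthogonal system `{e_k*, e_k}` and a set `G` of signed coordinates; if `K`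
is invariant for the semigroup and for the complementary projections `Id - Π_n`, and the
finite-rank drift `Σ` is inward pointing on the set `D`, then
`liminf_{t ↓ 0} d_K(S_t h + t Σ(h)) / t = 0` for every `h ∈ K`. -/
theorem stochastic_semigroup_nagumo_condition
    {H : Type*} [NormedAddCommGroup H] [InnerProductSpace ℝ H]
    (e estar : ℕ → H) (hnorm : ∀ k, ‖e k‖ = 1)
    (hbi : ∀ k l, ⟪estar k, e l⟫ = if k = l then (1 : ℝ) else 0)
    (G : Set (ℝ × ℕ)) (hG : ∀ p ∈ G, p.1 = -1 ∨ p.1 = 1)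
    (K : Set H) (hK : K = {h : H | ∀ p ∈ G, 0 ≤ p.1 * ⟪estar p.2, h⟫})
    (S : ℝ → H →L[ℝ] H)
    (hInv : ∀ t : ℝ, 0 ≤ t → ∀ h ∈ K, S t h ∈ K)
    (hProjInv : ∀ n : ℕ, 1 ≤ n → ∀ h ∈ K,
      h - ∑ k ∈ Finset.Icc 1 n, ⟪estar k, h⟫ • e k ∈ K)
    (D : Set ((ℝ × ℕ) × H))
    (hD : D = {q : (ℝ × ℕ) × H | q.1 ∈ G ∧ q.2 ∈ K ∧
      liminf (fun t : ℝ => ((q.1.1 * ⟪estar q.1.2, S t q.2⟫ / t : ℝ) : EReal))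
        (𝓝[>] (0 : ℝ)) < ⊤})
    (n : ℕ) (hn : 1 ≤ n) (Sig : H → H)
    (hrange : ∀ h : H, Sig h ∈ Submodule.span ℝ (e '' Set.Icc 1 n))
    (hdrift : ∀ q ∈ D,
      0 ≤ liminf (fun t : ℝ => ((q.1.1 * ⟪estar q.1.2, S t q.2⟫ / t : ℝ) : EReal))
            (𝓝[>] (0 : ℝ))
          + ((q.1.1 * ⟪estar q.1.2, Sig q.2⟫ : ℝ) : EReal)) :
    ∀ h ∈ K,
      liminf (fun t : ℝ => ((infDist (S t h + t • Sig h) K / t : ℝ) : EReal))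
        (𝓝[>] (0 : ℝ)) = 0 :=
  stochastic_semigroup_nagumo_condition_general e estar hnorm hbi G hG K hK S hInv D hD n Sig hrange
    hdrift
end

section
/- Let H be a real normed space, let M > 0, ε > 0, and let φ : H → ℝ be a function with |φ(f)| ≤ M for all f ∈ H. Let h ∈ H be such that φ(f) = 0 whenever ‖h − f‖ ≤ ε. Then for every g ∈ H with ‖g‖ ≤ ε/2 and every λ with 0 < λ ≤ ε²/(8M), the infimum inf_{f ∈ H} ( φ(f) + ‖(h − g) − f‖² / (2λ) ) equals 0. -/
/-- if `|φ| ≤ M` and `φ` vanishes on the closed ball of radius `ε` around `h`,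
then for `‖g‖ ≤ ε/2` and `0 < λ ≤ ε²/(8M)` the Moreau–Yosida regularization
`inf_{f} (φ(f) + ‖(h - g) - f‖²/(2λ))` equals `0`. -/
theorem moreau_yosida_vanishes_near_parallel_point
    {H : Type*} [NormedAddCommGroup H] [NormedSpace ℝ H]
    (M ε : ℝ) (hM : 0 < M) (hε : 0 < ε)
    (φ : H → ℝ) (hφ : ∀ f : H, |φ f| ≤ M)
    (h : H) (hzero : ∀ f : H, ‖h - f‖ ≤ ε → φ f = 0) :
    ∀ g : H, ‖g‖ ≤ ε / 2 → ∀ lam : ℝ, 0 < lam → lam ≤ ε ^ 2 / (8 * M) →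
      (⨅ f : H, (φ f + ‖(h - g) - f‖ ^ 2 / (2 * lam))) = 0 := by
  intro g hg lam hlam hlam2
  have hbdd : BddBelow (Set.range fun f : H => φ f + ‖(h - g) - f‖ ^ 2 / (2 * lam)) := by
    refine ⟨-M, ?_⟩
    rintro _ ⟨f, rfl⟩
    have h1 : -M ≤ φ f := neg_le_of_abs_le (hφ f)
    have h2 : 0 ≤ ‖(h - g) - f‖ ^ 2 / (2 * lam) :=
      div_nonneg (by positivity) (by positivity)
    linarith
  refine le_antisymm ?_ ?_
  · have hle := ciInf_le hbdd (h - g)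
    have hz : φ (h - g) = 0 := by
      apply hzero
      simpa using hg.trans (by linarith)
    simpa [hz] using hle
  · refine le_ciInf fun f => ?_
    by_cases hc : ‖h - f‖ ≤ ε
    · have hz := hzero f hc
      have : 0 ≤ ‖(h - g) - f‖ ^ 2 / (2 * lam) :=
        div_nonneg (by positivity) (by positivity)
      linarith
    · push_neg at hc
      have h1 : -M ≤ φ f := neg_le_of_abs_le (hφ f)
      have hnorm : ε / 2 ≤ ‖(h - g) - f‖ := by
        have := norm_sub_norm_le (h - f) g
        have heq : h - f - g = (h - g) - f := by abel
        rw [heq] at this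
        linarith
      have h3 : (ε / 2) ^ 2 ≤ ‖(h - g) - f‖ ^ 2 := by
        apply pow_le_pow_left₀ (by positivity) hnorm
      have h4 : M ≤ (ε / 2) ^ 2 / (2 * lam) := by
        rw [le_div_iff₀ (by positivity)]
        rw [le_div_iff₀ (by positivity)] at hlam2
        nlinarith
      have h5 : (ε / 2) ^ 2 / (2 * lam) ≤ ‖(h - g) - f‖ ^ 2 / (2 * lam) :=
        div_le_div_of_nonneg_right h3 (by positivity)
      linarith
end
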